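/- arXiv:2307.03439 — 4 statements merged into one kernel-verified Lean document; each statement's English description precedes it below -/
import Mathlib

section
/- Every positive integer power of a zig-zag matrix is again a zig-zag matrix: for a ∈ ℝ^M, c ∈ ℝ^{M-1} and every integer n ≥ 1, there exists v ∈ ℝ^{M-1} such that (Z(a,c))^n = Z(u,v), where u_j = a_j^n for j = 1,…,M. -/
/-- The `M × M` zig-zag matrix `Z(a,c)` built from the (1-based) diagonal
parameters `a₁, …, a_M` and off-diagonal parameters `c₁, …, c_{M-1}`:
`Z[i,i] = aᵢ` for all `i`; for every even (1-based) row index `i`,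
`Z[i,i-1] = c_{i-1}` and (when `i+1 ≤ M`) `Z[i,i+1] = cᵢ`; all other
entries vanish.  (Rows/columns `i : Fin M` carry the 1-based label `i.val + 1`.) -/
def zigzag (M : ℕ) (a c : ℕ → ℝ) : Matrix (Fin M) (Fin M) ℝ :=
  Matrix.of fun i j =>
    if i.val = j.val then a (i.val + 1)
    else if (i.val + 1) % 2 = 0 ∧ j.val + 1 = i.val then c (j.val + 1)
    else if (i.val + 1) % 2 = 0 ∧ j.val = i.val + 1 then c (i.val + 1)
    else 0

lemma zigzag_entry_decomp (M : ℕ) (a c : ℕ → ℝ) (i k : Fin M) :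
    zigzag M a c i k =
      (if k = i then a (i.val + 1) else 0)
      + (if (i.val + 1) % 2 = 0 ∧ k.val + 1 = i.val then c i.val else 0)
      + (if (i.val + 1) % 2 = 0 ∧ k.val = i.val + 1 then c (i.val + 1) else 0) := by
  simp only [zigzag, Matrix.of_apply, Fin.ext_iff]
  split_ifs <;> simp_all <;> omega



lemma zigzag_mul (M : ℕ) (a c u w : ℕ → ℝ) :
    zigzag M a c * zigzag M u w =
      zigzag M (fun j => a j * u j)
        (fun m => if m % 2 = 1 then c m * u m + a (m + 1) * w m
                  else a m * w m + c m * u (m + 1)) := by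
  ext i j
  rw [Matrix.mul_apply]
  simp only [zigzag_entry_decomp M a c i, add_mul, ite_mul, zero_mul,
    Finset.sum_add_distrib]
  rw [Finset.sum_ite_eq' Finset.univ i (fun k => a (i.val + 1) * zigzag M u w k j)]
  have e3 : zigzag M u w i j =
      if i.val = j.val then u (i.val + 1)
      else if (i.val + 1) % 2 = 0 ∧ j.val + 1 = i.val then w (j.val + 1)
      else if (i.val + 1) % 2 = 0 ∧ j.val = i.val + 1 then w (i.val + 1)
      else 0 := rfl
  have eR : zigzag M (fun j => a j * u j)
        (fun m => if m % 2 = 1 then c m * u m + a (m + 1) * w m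
                  else a m * w m + c m * u (m + 1)) i j =
      if i.val = j.val then a (i.val + 1) * u (i.val + 1)
      else if (i.val + 1) % 2 = 0 ∧ j.val + 1 = i.val then
        (if (j.val + 1) % 2 = 1 then c (j.val + 1) * u (j.val + 1) + a (j.val + 2) * w (j.val + 1)
         else a (j.val + 1) * w (j.val + 1) + c (j.val + 1) * u (j.val + 2))
      else if (i.val + 1) % 2 = 0 ∧ j.val = i.val + 1 then
        (if (i.val + 1) % 2 = 1 then c (i.val + 1) * u (i.val + 1) + a (i.val + 2) * w (i.val + 1)
         else a (i.val + 1) * w (i.val + 1) + c (i.val + 1) * u (i.val + 2))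
      else 0 := rfl
  rw [eR]
  by_cases hi : (i.val + 1) % 2 = 0
  · have hi1 : 1 ≤ i.val := by omega
    have hlt : i.val - 1 < M := by omega
    have hB : ∀ k : Fin M, ((i.val + 1) % 2 = 0 ∧ k.val + 1 = i.val) ↔ k = ⟨i.val - 1, hlt⟩ := by
      intro k; simp [Fin.ext_iff]; omega
    simp only [hB]
    rw [Finset.sum_ite_eq' Finset.univ ⟨i.val - 1, hlt⟩ (fun k => c i.val * zigzag M u w k j)]
    have e1 : zigzag M u w ⟨i.val - 1, hlt⟩ j = if i.val - 1 = j.val then u (i.val) else 0 := by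
      simp only [zigzag, Matrix.of_apply]
      have h2 : ¬(i.val % 2 = 0) := by omega
      have h3 : i.val - 1 + 1 = i.val := by omega
      simp [h3, h2]
    by_cases hM : i.val + 1 < M
    · have hC : ∀ k : Fin M, ((i.val + 1) % 2 = 0 ∧ k.val = i.val + 1) ↔ k = ⟨i.val + 1, hM⟩ := by
        intro k; simp [Fin.ext_iff, hi]
      simp only [hC]
      rw [Finset.sum_ite_eq' Finset.univ ⟨i.val + 1, hM⟩ (fun k => c (i.val + 1) * zigzag M u w k j)]
      have e2 : zigzag M u w ⟨i.val + 1, hM⟩ j = if i.val + 1 = j.val then u (i.val + 2) else 0 := by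
        simp only [zigzag, Matrix.of_apply]
        have h2 : ¬((i.val + 1 + 1) % 2 = 0) := by omega
        simp [h2]
      simp only [Finset.mem_univ, if_true, e1, e2, e3]
      clear hB hC e1 e2 e3 eR
      split_ifs
      all_goals (try (exfalso; (try simp only [Fin.ext_iff] at *); omega))
      all_goals (try ring1)
      all_goals
        (have hji : (j : ℕ) + 1 = (i : ℕ) := by omega
         simp only [show ((j : ℕ) + 2) = (i : ℕ) + 1 by omega, hji]
         ring1)
    · have hC : ∀ k : Fin M, ¬((i.val + 1) % 2 = 0 ∧ k.val = i.val + 1) := by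
        intro k; have := k.isLt; omega
      simp only [hC, if_false, Finset.sum_const_zero, add_zero]
      simp only [Finset.mem_univ, if_true, e1, e3]
      clear hB hC e1 e3 eR
      split_ifs
      all_goals (try (exfalso; (try simp only [Fin.ext_iff] at *); omega))
      all_goals (try ring1)
      all_goals
        (have hji : (j : ℕ) + 1 = (i : ℕ) := by omega
         simp only [show ((j : ℕ) + 2) = (i : ℕ) + 1 by omega, hji]
         ring1)
  · have hB : ∀ k : Fin M, ¬((i.val + 1) % 2 = 0 ∧ k.val + 1 = i.val) := by
      intro k; omega
    have hC : ∀ k : Fin M, ¬((i.val + 1) % 2 = 0 ∧ k.val = i.val + 1) := by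
      intro k; omega
    simp only [hB, hC, if_false, Finset.sum_const_zero, add_zero]
    simp only [Finset.mem_univ, if_true, e3]
    clear hB hC e3 eR
    split_ifs
    all_goals (try (exfalso; (try simp only [Fin.ext_iff] at *); omega))
    all_goals (try ring1)
    all_goals
      (have hji : (j : ℕ) + 1 = (i : ℕ) := by omega
       simp only [show ((j : ℕ) + 2) = (i : ℕ) + 1 by omega, hji]
       ring1)

/-- Every positive integer power of a zig-zag matrix is again a zig-zag matrix,
with `j`-th diagonal entry `aⱼⁿ`. -/
theorem zigzag_pow (M : ℕ) (a c : ℕ → ℝ) (n : ℕ) (hn : 1 ≤ n) :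
    ∃ v : ℕ → ℝ, zigzag M a c ^ n = zigzag M (fun j => a j ^ n) v := by
  induction n with
  | zero => omega
  | succ m ih =>
    by_cases hm : m = 0
    · subst hm
      refine ⟨c, ?_⟩
      have h1 : (fun j => a j ^ 1) = a := by funext j; simp
      rw [pow_one, h1]
    · obtain ⟨w, hw⟩ := ih (by omega)
      refine ⟨fun k => if k % 2 = 1 then c k * a k ^ m + a (k + 1) * w k
          else a k * w k + c k * a (k + 1) ^ m, ?_⟩
      rw [pow_succ', hw, zigzag_mul]
      have h1 : (fun j => a j * a j ^ m) = fun j => a j ^ (m + 1) := by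
        funext j; rw [← pow_succ']
      rw [h1]
end

section
/- Assume a_j ≠ 0 for every j = 1,…,M. Then (Z(a,0))^2 · (Z(a,c)^{-1})^2 · (Z(a,0))^2 = Z(ã, −c̃), where ã_j = a_j^2 for j = 1,…,M and c̃_k = c_k (a_k + a_{k+1}) for k = 1,…,M−1. -/
open Matrix

private lemma zz_zero_diag (M : ℕ) (a : ℕ → ℝ) :
    zigzag M a (fun _ => 0) = diagonal (fun i : Fin M => a (i.val + 1)) := by
  ext i j
  simp only [zigzag, of_apply, diagonal_apply, Fin.ext_iff]
  split_ifs <;> simp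

private lemma zz_decomp (M : ℕ) (a c : ℕ → ℝ) :
    zigzag M a c
      = diagonal (fun i : Fin M => a (i.val + 1)) + zigzag M (fun _ => 0) c := by
  ext i j
  simp only [zigzag, of_apply, Matrix.add_apply, diagonal_apply, Fin.ext_iff]
  split_ifs <;> simp

private lemma zzC_row (M : ℕ) (c : ℕ → ℝ) (k j : Fin M) (hk : k.val % 2 = 0) :
    zigzag M (fun _ => 0) c k j = 0 := by
  simp only [zigzag, of_apply]
  split_ifs with h1 h2 h3 <;> first | rfl | omega

private lemma zzC_col (M : ℕ) (c : ℕ → ℝ) (i k : Fin M) (hk : k.val % 2 = 1) :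
    zigzag M (fun _ => 0) c i k = 0 := by
  simp only [zigzag, of_apply]
  split_ifs with h1 h2 h3 <;> first | rfl | omega

private lemma zzC_sandwich (M : ℕ) (c : ℕ → ℝ) (d : Fin M → ℝ) :
    zigzag M (fun _ => 0) c * diagonal d * zigzag M (fun _ => 0) c = 0 := by
  ext i j
  rw [Matrix.mul_apply, Matrix.zero_apply]
  apply Finset.sum_eq_zero
  intro k _
  rcases Nat.even_or_odd k.val with h | h
  · rw [zzC_row M c k j (Nat.even_iff.mp h), mul_zero]
  · rw [Matrix.mul_diagonal, zzC_col M c i k (Nat.odd_iff.mp h), zero_mul, zero_mul]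

private lemma zz_final (M : ℕ) (a c : ℕ → ℝ) :
    diagonal (fun i : Fin M => a (i.val + 1) * a (i.val + 1))
      - zigzag M (fun _ => 0) c * diagonal (fun i : Fin M => a (i.val + 1))
      - diagonal (fun i : Fin M => a (i.val + 1)) * zigzag M (fun _ => 0) c
      = zigzag M (fun j => a j ^ 2) (fun k => -(c k * (a k + a (k + 1)))) := by
  ext i j
  simp only [Matrix.sub_apply, mul_diagonal, diagonal_mul, zigzag, of_apply, diagonal_apply,
    Fin.ext_iff]
  split_ifs with h1 h2 h3 h2' h3' <;> try omega
  · ring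
  · rw [show (i : ℕ) = (j : ℕ) + 1 by omega]; ring
  · rw [show (j : ℕ) = (i : ℕ) + 1 by omega]; ring
  · simp

/-- For `a₁, …, a_M` all nonzero,
`Z(a,0)² · (Z(a,c)⁻¹)² · Z(a,0)² = Z(ã, -c̃)` where `ãⱼ = aⱼ²` and
`c̃_k = c_k (a_k + a_{k+1})`. -/
theorem zigzag_diag_sq_inv_sq_diag_sq (M : ℕ) (a c : ℕ → ℝ)
    (ha : ∀ j, 1 ≤ j → j ≤ M → a j ≠ 0) :
    zigzag M a (fun _ => 0) ^ 2 * ((zigzag M a c)⁻¹) ^ 2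
        * zigzag M a (fun _ => 0) ^ 2
      = zigzag M (fun j => a j ^ 2) (fun k => -(c k * (a k + a (k + 1)))) := by
  have hdne : ∀ i : Fin M, a (i.val + 1) ≠ 0 := fun i => ha _ (by omega) (by omega)
  set C : Matrix (Fin M) (Fin M) ℝ := zigzag M (fun _ => 0) c with hC
  set D : Matrix (Fin M) (Fin M) ℝ := diagonal (fun i : Fin M => a (i.val + 1)) with hD
  set Di : Matrix (Fin M) (Fin M) ℝ := diagonal (fun i : Fin M => (a (i.val + 1))⁻¹)
    with hDi
  have hDDi : D * Di = 1 := by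
    rw [hD, hDi, diagonal_mul_diagonal,
      show (fun i : Fin M => a (i.val + 1) * (a (i.val + 1))⁻¹) = fun _ => (1 : ℝ) from
        funext fun i => mul_inv_cancel₀ (hdne i), diagonal_one]
  have hDiD : Di * D = 1 := by
    rw [hD, hDi, diagonal_mul_diagonal,
      show (fun i : Fin M => (a (i.val + 1))⁻¹ * a (i.val + 1)) = fun _ => (1 : ℝ) from
        funext fun i => inv_mul_cancel₀ (hdne i), diagonal_one]
  have hCdC : ∀ d' : Fin M → ℝ, C * diagonal d' * C = 0 := fun d' =>
    zzC_sandwich M c d'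
  have hCDiC : C * Di * C = 0 := by rw [hDi]; exact hCdC _
  have key : zigzag M a c * (Di - Di * C * Di) = 1 := by
    rw [zz_decomp M a c, ← hD, ← hC]
    have expand : (D + C) * (Di - Di * C * Di)
        = D * Di + C * Di - (D * Di) * (C * Di) - (C * Di * C) * Di := by
      noncomm_ring
    rw [expand, hDDi, hCDiC, one_mul, zero_mul, sub_zero, add_sub_cancel_right]
  have hinv : (zigzag M a c)⁻¹ = Di - Di * C * Di := inv_eq_right_inv key
  have hDi2 : Di * Di = diagonal (fun i : Fin M => (a (i.val + 1))⁻¹ * (a (i.val + 1))⁻¹) := by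
    rw [hDi, diagonal_mul_diagonal]
  have hCDi2C : C * (Di * Di) * C = 0 := by rw [hDi2]; exact hCdC _
  have hE2 : (Di - Di * C * Di) * (Di - Di * C * Di)
      = Di * Di - (Di * Di) * C * Di - Di * C * (Di * Di)
        + Di * (C * (Di * Di) * C) * Di := by
    noncomm_ring
  have hD2 : D * D = diagonal (fun i : Fin M => a (i.val + 1) * a (i.val + 1)) := by
    rw [hD, diagonal_mul_diagonal]
  have hD2Di2 : (D * D) * (Di * Di) = 1 := by
    rw [hD2, hDi2, diagonal_mul_diagonal,
      show (fun i : Fin M => a (i.val + 1) * a (i.val + 1)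
          * ((a (i.val + 1))⁻¹ * (a (i.val + 1))⁻¹)) = fun _ => (1 : ℝ) from
        funext fun i => by field_simp [hdne i], diagonal_one]
  have hDi2D2 : (Di * Di) * (D * D) = 1 := by
    rw [hD2, hDi2, diagonal_mul_diagonal,
      show (fun i : Fin M => (a (i.val + 1))⁻¹ * (a (i.val + 1))⁻¹
          * (a (i.val + 1) * a (i.val + 1))) = fun _ => (1 : ℝ) from
        funext fun i => by field_simp [hdne i], diagonal_one]
  have hDiD2 : Di * (D * D) = D := by
    rw [hD2, hDi, diagonal_mul_diagonal, hD,
      show (fun i : Fin M => (a (i.val + 1))⁻¹ * (a (i.val + 1) * a (i.val + 1)))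
          = fun i : Fin M => a (i.val + 1) from
        funext fun i => by field_simp [hdne i]]
  have hD2Di : (D * D) * Di = D := by
    rw [hD2, hDi, diagonal_mul_diagonal, hD,
      show (fun i : Fin M => a (i.val + 1) * a (i.val + 1) * (a (i.val + 1))⁻¹)
          = fun i : Fin M => a (i.val + 1) from
        funext fun i => by field_simp [hdne i]]
  have hsq : ∀ A : Matrix (Fin M) (Fin M) ℝ, A ^ 2 = A * A := fun A => sq A
  rw [hsq, hsq, hinv, zz_zero_diag M a, ← hD, hE2, hCDi2C]
  have expand2 : D * D * (Di * Di - Di * Di * C * Di - Di * C * (Di * Di)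
        + Di * 0 * Di) * (D * D)
      = (D * D * (Di * Di)) * (D * D)
        - (D * D * (Di * Di)) * (C * (Di * (D * D)))
        - ((D * D) * Di) * (C * ((Di * Di) * (D * D))) := by
    noncomm_ring
  rw [expand2, hD2Di2, hDiD2, hD2Di, hDi2D2, one_mul, one_mul, mul_one, hD2, hD, hC]
  exact zz_final M a c
end

section
/- Let H = Z(a,c) be an M×M zig-zag matrix with a_k ≠ a_{k+1} for k = 1,…,M−1, define q ∈ ℝ^{M-1} by q_k = (−1)^k c_k/(a_k − a_{k+1}), let 𝟙 ∈ ℝ^M be the all-ones vector, and set K = (Z(𝟙,q))^T. Then for every κ ∈ ℝ^M the matrix Θ(κ) = K · diag(κ_1,…,κ_M) · K^T satisfies the quasi-Hermiticity relation H^T · Θ(κ) = Θ(κ) · H. -/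
open Matrix

/-- The off-diagonal part of a zig-zag matrix. -/
def offd (M : ℕ) (c : ℕ → ℝ) : Matrix (Fin M) (Fin M) ℝ :=
  Matrix.of fun i j =>
    if (i.val + 1) % 2 = 0 ∧ j.val + 1 = i.val then c (j.val + 1)
    else if (i.val + 1) % 2 = 0 ∧ j.val = i.val + 1 then c (i.val + 1)
    else 0

lemma zigzag_eq_add (M : ℕ) (a c : ℕ → ℝ) :
    zigzag M a c = Matrix.diagonal (fun i : Fin M => a (i.val + 1)) + offd M c := by
  ext i j
  simp only [zigzag, offd, Matrix.of_apply, Matrix.add_apply, Matrix.diagonal_apply]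
  by_cases hij : i = j
  · subst hij
    rw [if_pos rfl, if_pos rfl, if_neg (by omega), if_neg (by omega)]
    ring
  · have hv : ¬ i.val = j.val := fun h => hij (Fin.ext h)
    rw [if_neg hv, if_neg hij, zero_add]

lemma offd_mul_offd (M : ℕ) (c c' : ℕ → ℝ) : offd M c * offd M c' = 0 := by
  ext i j
  rw [Matrix.mul_apply, Matrix.zero_apply]
  apply Finset.sum_eq_zero
  intro k _
  by_cases hk : (k.val + 1) % 2 = 0
  · have h1 : offd M c i k = 0 := by
      simp only [offd, Matrix.of_apply]
      split_ifs with h1 h2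
      · exfalso; omega
      · exfalso; omega
      · rfl
    rw [h1, zero_mul]
  · have h2 : offd M c' k j = 0 := by
      simp only [offd, Matrix.of_apply]
      split_ifs with h1 h2
      · exact absurd h1.1 hk
      · exact absurd h2.1 hk
      · rfl
    rw [h2, mul_zero]

lemma offd_eq_comm (M : ℕ) (a c : ℕ → ℝ)
    (ha : ∀ k, 1 ≤ k → k + 1 ≤ M → a k ≠ a (k + 1)) :
    offd M c =
      Matrix.diagonal (fun i : Fin M => a (i.val + 1)) *
        offd M (fun k => (-1 : ℝ) ^ k * c k / (a k - a (k + 1))) -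
      offd M (fun k => (-1 : ℝ) ^ k * c k / (a k - a (k + 1))) *
        Matrix.diagonal (fun i : Fin M => a (i.val + 1)) := by
  ext i j
  simp only [Matrix.sub_apply, Matrix.diagonal_mul, Matrix.mul_diagonal, offd,
    Matrix.of_apply]
  split_ifs with h1 h2
  · -- j.val + 1 = i.val
    have hne : a (j.val + 1) ≠ a (j.val + 1 + 1) :=
      ha (j.val + 1) (by omega) (by omega)
    have hodd : (-1 : ℝ) ^ (j.val + 1) = -1 := Odd.neg_one_pow (by
      refine Nat.odd_iff.mpr ?_
      omega)
    have hi : i.val + 1 = j.val + 1 + 1 := by omega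
    have hs : a (j.val + 1) - a (j.val + 1 + 1) ≠ 0 := sub_ne_zero.mpr hne
    rw [hi, hodd]
    field_simp
    ring
  · -- j.val = i.val + 1
    have hne : a (i.val + 1) ≠ a (i.val + 1 + 1) :=
      ha (i.val + 1) (by omega) (by omega)
    have heven : (-1 : ℝ) ^ (i.val + 1) = 1 := Even.neg_one_pow (Nat.even_iff.mpr h2.1)
    have hj : j.val + 1 = i.val + 1 + 1 := by omega
    have hs : a (i.val + 1) - a (i.val + 1 + 1) ≠ 0 := sub_ne_zero.mpr hne
    rw [hj, heven]
    field_simp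
  · ring

/-- Quasi-Hermiticity of the zig-zag Hamiltonian `H = Z(a,c)`: with
`a_k ≠ a_{k+1}` for `k = 1, …, M-1`, `q_k = (-1)^k c_k/(a_k - a_{k+1})` and
`K = Z(𝟙,q)ᵀ`, for every `κ ∈ ℝ^M` the matrix
`Θ(κ) = K · diag(κ₁, …, κ_M) · Kᵀ` satisfies `Hᵀ · Θ(κ) = Θ(κ) · H`. -/
theorem zigzag_metric_intertwines (M : ℕ) (a c κ : ℕ → ℝ)
    (ha : ∀ k, 1 ≤ k → k + 1 ≤ M → a k ≠ a (k + 1)) :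
    ∀ K Θ : Matrix (Fin M) (Fin M) ℝ,
      K = (zigzag M (fun _ => 1)
            (fun k => (-1 : ℝ) ^ k * c k / (a k - a (k + 1))))ᵀ →
      Θ = K * Matrix.diagonal (fun i : Fin M => κ (i.val + 1)) * Kᵀ →
      (zigzag M a c)ᵀ * Θ = Θ * zigzag M a c := by
  intro K Θ hK hΘ
  set q : ℕ → ℝ := fun k => (-1 : ℝ) ^ k * c k / (a k - a (k + 1)) with hq
  set D : Matrix (Fin M) (Fin M) ℝ :=
    Matrix.diagonal (fun i : Fin M => a (i.val + 1)) with hD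
  set Dκ : Matrix (Fin M) (Fin M) ℝ :=
    Matrix.diagonal (fun i : Fin M => κ (i.val + 1)) with hDκ
  set Q : Matrix (Fin M) (Fin M) ℝ := offd M q with hQ
  set N : Matrix (Fin M) (Fin M) ℝ := offd M c with hN
  have hDt : Dᵀ = D := Matrix.diagonal_transpose _
  have hNDQ : N = D * Q - Q * D := offd_eq_comm M a c ha
  have hQN : Q * N = 0 := offd_mul_offd M q c
  have hz1 : zigzag M (fun _ => 1) q = 1 + Q := by
    rw [zigzag_eq_add]
    congr 1
    all_goals exact Matrix.diagonal_one
  have hH : zigzag M a c = D + N := zigzag_eq_add M a c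
  -- the key intertwining relation: Hᵀ K = K D
  have key : (zigzag M a c)ᵀ * K = K * D := by
    rw [hH, hK, hz1]
    have h1 : Nᵀ * (Qᵀ) = 0 := by
      rw [← Matrix.transpose_mul, hQN, Matrix.transpose_zero]
    have h2 : Nᵀ = Qᵀ * D - D * Qᵀ := by
      rw [hNDQ, Matrix.transpose_sub, Matrix.transpose_mul, Matrix.transpose_mul, hDt]
    have expand : (D + N)ᵀ * (1 + Q)ᵀ = D + D * Qᵀ + Nᵀ + Nᵀ * Qᵀ := by
      rw [Matrix.transpose_add, Matrix.transpose_add, hDt, Matrix.transpose_one]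
      noncomm_ring
    rw [expand, h1, h2, Matrix.transpose_add, Matrix.transpose_one]
    noncomm_ring
  have keyT : Kᵀ * zigzag M a c = D * Kᵀ := by
    have := congrArg Matrix.transpose key
    rwa [Matrix.transpose_mul, Matrix.transpose_mul, Matrix.transpose_transpose, hDt]
      at this
  have hcomm : D * Dκ = Dκ * D := by
    ext i j
    by_cases h : i = j
    · subst h; simp [hD, hDκ, Matrix.diagonal_apply, mul_comm]
    · simp [hD, hDκ, Matrix.diagonal_apply, h, mul_comm]
  calc (zigzag M a c)ᵀ * Θ
      = ((zigzag M a c)ᵀ * K) * Dκ * Kᵀ := by rw [hΘ]; noncomm_ring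
    _ = K * (D * Dκ) * Kᵀ := by rw [key]; noncomm_ring
    _ = K * Dκ * (D * Kᵀ) := by rw [hcomm]; noncomm_ring
    _ = K * Dκ * (Kᵀ * zigzag M a c) := by rw [keyT]
    _ = Θ * zigzag M a c := by rw [hΘ]; noncomm_ring
end

section
/- Let H = Z(a,c) be an M×M zig-zag matrix whose diagonal entries a_1,…,a_M are pairwise distinct, define q ∈ ℝ^{M-1} by q_k = (−1)^k c_k/(a_k − a_{k+1}), let 𝟙 ∈ ℝ^M be the all-ones vector, and set K = (Z(𝟙,q))^T. Then every real M×M matrix Θ satisfying the intertwining relation H^T Θ = Θ H is of the form Θ = K · diag(d_1,…,d_M) · K^T for some d ∈ ℝ^M; moreover such a Θ is positive definite if and only if d_n > 0 for every n. Hence every metric making H quasi-Hermitian arises from formula Θ(κ) = K diag(κ) K^T with positive parameters κ_n. -/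
open Matrix

private lemma posDef_conj {n : Type*} [Fintype n] [DecidableEq n]
    {A : Matrix n n ℝ} (hA : A.PosDef) (K : Matrix n n ℝ) (hK : IsUnit K) :
    (K * A * Kᵀ).PosDef := by
  have ht : Kᵀ = Kᴴ := (Matrix.conjTranspose_eq_transpose_of_trivial K).symm
  rw [ht]
  refine Matrix.PosDef.of_dotProduct_mulVec_pos ?_ ?_
  · have := Matrix.isHermitian_mul_mul_conjTranspose K hA.1
    simpa [mul_assoc] using this
  · intro x hx
    have hKu : IsUnit Kᴴ := by
      rw [← ht]; exact (Matrix.isUnit_transpose (A := K)).mpr hK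
    have hinj : Function.Injective (Kᴴ).mulVec :=
      Matrix.mulVec_injective_iff_isUnit.mpr hKu
    have hy : Kᴴ *ᵥ x ≠ 0 := by
      intro h
      exact hx (hinj (by simpa using h))
    have := hA.dotProduct_mulVec_pos hy
    simpa only [star_mulVec, dotProduct_mulVec, vecMul_vecMul, Matrix.mulVec_mulVec,
      Matrix.conjTranspose_conjTranspose, mul_assoc] using this

/-- Completeness of the family of metrics: let `H = Z(a,c)` have pairwise
distinct (1-based) diagonal entries `a₁, …, a_M`, let
`q_k = (-1)^k c_k/(a_k - a_{k+1})` and `K = Z(𝟙,q)ᵀ`.  Then every real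
`M × M` matrix `Θ` satisfying the intertwining relation `Hᵀ Θ = Θ H` has the
form `Θ = K · diag(d₁, …, d_M) · Kᵀ` for some `d ∈ ℝ^M`, and such a `Θ` is
positive definite precisely when all the `dₙ` are positive; hence every metric
making `H` quasi-Hermitian arises as `Θ(κ) = K diag(κ) Kᵀ` with `κₙ > 0`. -/
theorem zigzag_all_metrics (M : ℕ) (a c : ℕ → ℝ)
    (ha : ∀ j k, 1 ≤ j → j ≤ M → 1 ≤ k → k ≤ M → j ≠ k → a j ≠ a k) :
    ∀ K : Matrix (Fin M) (Fin M) ℝ,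
      K = (zigzag M (fun _ => 1)
            (fun k => (-1 : ℝ) ^ k * c k / (a k - a (k + 1))))ᵀ →
      ∀ Θ : Matrix (Fin M) (Fin M) ℝ,
        (zigzag M a c)ᵀ * Θ = Θ * zigzag M a c →
        ∃ d : ℕ → ℝ,
          Θ = K * Matrix.diagonal (fun i : Fin M => d (i.val + 1)) * Kᵀ ∧
          (Θ.PosDef ↔ ∀ n, 1 ≤ n → n ≤ M → 0 < d n) := by
  intro K hK Θ hΘ
  classical
  set q : ℕ → ℝ := fun k => (-1 : ℝ) ^ k * c k / (a k - a (k + 1)) with hqdef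
  set H : Matrix (Fin M) (Fin M) ℝ := zigzag M a c with hHdef
  set A : Matrix (Fin M) (Fin M) ℝ :=
    Matrix.diagonal (fun i : Fin M => a (i.val + 1)) with hAdef
  set Q : Matrix (Fin M) (Fin M) ℝ := zigzag M (fun _ => 0) q with hQdef
  -- L = 1 + Q
  have hL1 : zigzag M (fun _ => 1) q = 1 + Q := by
    ext i j
    by_cases h : i = j
    · subst h
      simp [hQdef, zigzag, Matrix.one_apply, Matrix.add_apply]
    · have h' : i.val ≠ j.val := fun hc => h (Fin.ext hc)
      simp [hQdef, zigzag, Matrix.one_apply, Matrix.add_apply, h, h']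
  -- vanishing rows/columns of Q
  have hQ0 : ∀ i k : Fin M, (k.val + 1) % 2 = 0 → Q i k = 0 := by
    intro i k hk
    simp only [hQdef, zigzag, Matrix.of_apply]
    split_ifs with h1 h2 h3
    · rfl
    · exfalso; omega
    · exfalso; omega
    · rfl
  have hQ0' : ∀ k j : Fin M, (k.val + 1) % 2 ≠ 0 → Q k j = 0 := by
    intro k j hk
    simp only [hQdef, zigzag, Matrix.of_apply]
    split_ifs with h1 h2 h3
    · rfl
    · exact absurd h2.1 hk
    · exact absurd h3.1 hk
    · rfl
  have hQQ : Q * Q = 0 := by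
    ext i j
    rw [Matrix.mul_apply, Matrix.zero_apply]
    refine Finset.sum_eq_zero fun k _ => ?_
    by_cases hk : (k.val + 1) % 2 = 0
    · rw [hQ0 i k hk, zero_mul]
    · rw [hQ0' k j hk, mul_zero]
  have hQH : Q * H = Q * A := by
    ext i j
    rw [Matrix.mul_apply, Matrix.mul_apply]
    refine Finset.sum_congr rfl fun k _ => ?_
    by_cases hk : (k.val + 1) % 2 = 0
    · rw [hQ0 i k hk, zero_mul, zero_mul]
    · congr 1
      by_cases hkj : k = j
      · subst hkj
        simp [hHdef, hAdef, zigzag]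
      · have h' : k.val ≠ j.val := fun hc => hkj (Fin.ext hc)
        simp [hHdef, hAdef, zigzag, Matrix.diagonal_apply_ne _ hkj, h', hk]
  have hHC : H = A + (A * Q - Q * A) := by
    ext i j
    simp only [Matrix.add_apply, Matrix.sub_apply, hAdef, Matrix.diagonal_mul,
      Matrix.mul_diagonal]
    by_cases hij : i = j
    · subst hij
      simp [hHdef, hQdef, zigzag]
    · have h' : i.val ≠ j.val := fun hc => hij (Fin.ext hc)
      rw [Matrix.diagonal_apply_ne _ hij]
      simp only [hHdef, hQdef, zigzag, Matrix.of_apply, if_neg h']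
      split_ifs with h2 h3
      · -- j + 1 = i (1-based k = j.val + 1, odd)
        obtain ⟨hpar, hji⟩ := h2
        have hodd : (-1 : ℝ) ^ (j.val + 1) = -1 :=
          Odd.neg_one_pow (Nat.odd_iff.mpr (by omega))
        have hne : a (j.val + 1) - a (j.val + 1 + 1) ≠ 0 := by
          refine sub_ne_zero.mpr (ha _ _ (by omega) (by omega) (by omega)
            (by have := i.isLt; omega) (by omega))
        rw [hqdef]
        simp only
        rw [hodd]
        have hiv : i.val + 1 = j.val + 1 + 1 := by omega
        rw [hiv]
        field_simp
        ring
      · -- j = i + 1 (1-based k = i.val + 1, even)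
        obtain ⟨hpar, hji⟩ := h3
        have heven : (-1 : ℝ) ^ (i.val + 1) = 1 :=
          Even.neg_one_pow (Nat.even_iff.mpr (by omega))
        have hne : a (i.val + 1) - a (i.val + 1 + 1) ≠ 0 := by
          refine sub_ne_zero.mpr (ha _ _ (by omega) (by omega) (by omega)
            (by have := j.isLt; omega) (by omega))
        rw [hqdef]
        simp only
        rw [heven]
        have hjv : j.val + 1 = i.val + 1 + 1 := by omega
        rw [hjv]
        field_simp
        ring
      · simp
  -- intertwining: (1+Q) H = A (1+Q)
  have hLH : (1 + Q) * H = A * (1 + Q) := by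
    rw [add_mul, one_mul, hQH, hHC]
    noncomm_ring
  have hLL' : (1 + Q) * (1 - Q) = 1 := by
    have h : (1 + Q) * (1 - Q) = 1 - Q * Q := by noncomm_ring
    rw [h, hQQ, sub_zero]
  have hL'L : (1 - Q) * (1 + Q) = 1 := by
    have h : (1 - Q) * (1 + Q) = 1 - Q * Q := by noncomm_ring
    rw [h, hQQ, sub_zero]
  have hHL' : H * (1 - Q) = (1 - Q) * A := by
    have h2 : H = (1 - Q) * (A * (1 + Q)) := by
      have h := congrArg (fun X => (1 - Q) * X) hLH
      rw [← mul_assoc, hL'L, one_mul] at h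
      exact h
    rw [h2, mul_assoc, mul_assoc, hLL', mul_one]
  have hAt : Aᵀ = A := by rw [hAdef, Matrix.diagonal_transpose]
  have hAL : A * (1 - Q)ᵀ = (1 - Q)ᵀ * Hᵀ := by
    have h := congrArg Matrix.transpose hHL'
    rw [Matrix.transpose_mul, Matrix.transpose_mul, hAt] at h
    exact h.symm
  set Φ : Matrix (Fin M) (Fin M) ℝ := (1 - Q)ᵀ * Θ * (1 - Q) with hΦdef
  have hcomm : A * Φ = Φ * A := by
    calc A * Φ = (A * (1 - Q)ᵀ) * Θ * (1 - Q) := by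
          rw [hΦdef, ← mul_assoc, ← mul_assoc]
      _ = (1 - Q)ᵀ * (Hᵀ * Θ) * (1 - Q) := by rw [hAL, mul_assoc ((1 - Q)ᵀ)]
      _ = (1 - Q)ᵀ * (Θ * H) * (1 - Q) := by rw [hΘ]
      _ = (1 - Q)ᵀ * Θ * (H * (1 - Q)) := by
          rw [← mul_assoc, mul_assoc ((1 - Q)ᵀ * Θ)]
      _ = (1 - Q)ᵀ * Θ * ((1 - Q) * A) := by rw [hHL']
      _ = Φ * A := by rw [hΦdef, ← mul_assoc]
  have hΦd : ∀ i j : Fin M, i ≠ j → Φ i j = 0 := by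
    intro i j hij
    have h1 := congrFun (congrFun hcomm i) j
    rw [hAdef] at h1
    rw [Matrix.diagonal_mul, Matrix.mul_diagonal] at h1
    have hne : a (i.val + 1) ≠ a (j.val + 1) := by
      refine ha _ _ (by omega) (by have := i.isLt; omega) (by omega)
        (by have := j.isLt; omega) (fun hc => hij (Fin.ext (by omega)))
    have h2 : (a (i.val + 1) - a (j.val + 1)) * Φ i j = 0 := by
      rw [sub_mul, h1]; ring
    exact (mul_eq_zero.mp h2).resolve_left (sub_ne_zero.mpr hne)
  have hΦdiag : Φ = Matrix.diagonal (fun i => Φ i i) := by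
    ext i j
    by_cases hij : i = j
    · subst hij; simp
    · rw [Matrix.diagonal_apply_ne _ hij]; exact hΦd i j hij
  set d : ℕ → ℝ := fun n => if h : n - 1 < M then Φ ⟨n - 1, h⟩ ⟨n - 1, h⟩ else 1 with hd
  have hD : (Matrix.diagonal fun i : Fin M => d (i.val + 1))
      = Matrix.diagonal (fun i => Φ i i) := by
    have h : (fun i : Fin M => d (i.val + 1)) = fun i => Φ i i := by
      funext i
      have hlt : i.val + 1 - 1 < M := by have := i.isLt; omega
      rw [hd]
      simp only
      rw [dif_pos hlt]
      rfl
    rw [h]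
  have hKQ : K = (1 + Q)ᵀ := by rw [hK, hL1]
  have hKu : IsUnit K := by
    refine ⟨⟨K, (1 - Q)ᵀ, ?_, ?_⟩, rfl⟩
    · rw [hKQ, ← Matrix.transpose_mul, hL'L, Matrix.transpose_one]
    · rw [hKQ, ← Matrix.transpose_mul, hLL', Matrix.transpose_one]
  have hKu' : IsUnit ((1 - Q)ᵀ) := by
    refine ⟨⟨(1 - Q)ᵀ, (1 + Q)ᵀ, ?_, ?_⟩, rfl⟩
    · rw [← Matrix.transpose_mul, hLL', Matrix.transpose_one]
    · rw [← Matrix.transpose_mul, hL'L, Matrix.transpose_one]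
  have hfact : Θ = K * Matrix.diagonal (fun i : Fin M => d (i.val + 1)) * Kᵀ := by
    rw [hD, ← hΦdiag, hKQ, Matrix.transpose_transpose]
    have h : (1 + Q)ᵀ * Φ * (1 + Q)
        = ((1 - Q) * (1 + Q))ᵀ * Θ * ((1 - Q) * (1 + Q)) := by
      rw [hΦdef, Matrix.transpose_mul]
      noncomm_ring
    rw [h, hL'L, Matrix.transpose_one, one_mul, mul_one]
  refine ⟨d, hfact, ?_, ?_⟩
  · intro hΘpd n h1 h2
    have hΦpd : Φ.PosDef := by
      have := posDef_conj hΘpd ((1 - Q)ᵀ) hKu'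
      rw [Matrix.transpose_transpose] at this
      exact this
    rw [hΦdiag] at hΦpd
    have h3 := Matrix.posDef_diagonal_iff.mp hΦpd ⟨n - 1, by omega⟩
    have hlt : n - 1 < M := by omega
    rw [hd]
    simp only
    rw [dif_pos hlt]
    exact h3
  · intro hdp
    have hDpd : (Matrix.diagonal fun i : Fin M => d (i.val + 1)).PosDef :=
      Matrix.posDef_diagonal_iff.mpr fun i =>
        hdp (i.val + 1) (by omega) (by have := i.isLt; omega)
    rw [hfact]
    exact posDef_conj hDpd K hKu
end
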